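/- arXiv:1411.4438 — 5 statements merged into one kernel-verified Lean document; each statement's English description precedes it below -/
import Mathlib

section
/- With the discrete-time two-mode switching backward induction and the assumptions γ₋(t_m) + γ₊(t_m) > 0 a.s., −γ₊(t_M) ≤ Γ ≤ γ₋(t_M) a.s. (where Γ = Γ₁ − Γ₀), the difference process V̂_m := Ŷ¹_m − Ŷ⁰_m satisfies the backward recursion V̂_M = Γ and, for m = M−1,…,0, V̂_m = min( γ₋(t_m), max( −γ₊(t_m), E[V̂_{m+1} | F_{t_m}] ) ) almost surely. -/
open MeasureTheory

/-- The difference of the two switching value processes satisfies the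
Dynkin game backward recursion: `V̂_M = Γ` and
`V̂_m = min(γ₋, max(−γ₊, E[V̂_{m+1}|ℱ_m]))`. -/
theorem switching_difference_recursion {Ω : Type*} {m0 : MeasurableSpace Ω}
    (μ : Measure Ω) [IsProbabilityMeasure μ] (ℱ : Filtration ℕ m0) (M : ℕ)
    (γminus γplus : ℕ → Ω → ℝ) (Y0 Y1 : ℕ → Ω → ℝ) (Γ0 Γ1 : Ω → ℝ)
    (hint0 : ∀ m, Integrable (Y0 m) μ) (hint1 : ∀ m, Integrable (Y1 m) μ)
    (hterm0 : Y0 M = Γ0) (hterm1 : Y1 M = Γ1)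
    (hrec0 : ∀ m < M, ∀ᵐ ω ∂μ,
      Y0 m ω = max ((μ[Y0 (m + 1)|ℱ m]) ω) (-γminus m ω + (μ[Y1 (m + 1)|ℱ m]) ω))
    (hrec1 : ∀ m < M, ∀ᵐ ω ∂μ,
      Y1 m ω = max ((μ[Y1 (m + 1)|ℱ m]) ω) (-γplus m ω + (μ[Y0 (m + 1)|ℱ m]) ω))
    (hpos : ∀ m, ∀ᵐ ω ∂μ, 0 < γminus m ω + γplus m ω)
    (hΓ : ∀ᵐ ω ∂μ, -γplus M ω ≤ Γ1 ω - Γ0 ω ∧ Γ1 ω - Γ0 ω ≤ γminus M ω) :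
    (∀ ω, Y1 M ω - Y0 M ω = Γ1 ω - Γ0 ω) ∧
    ∀ m < M, ∀ᵐ ω ∂μ,
      Y1 m ω - Y0 m ω =
        min (γminus m ω)
          (max (-γplus m ω)
            ((μ[fun ω' => Y1 (m + 1) ω' - Y0 (m + 1) ω'|ℱ m]) ω)) := by
  constructor
  · intro ω; rw [hterm0, hterm1]
  · intro m hm
    have hsub : (μ[fun ω' => Y1 (m + 1) ω' - Y0 (m + 1) ω'|ℱ m]) =ᵐ[μ]
        fun ω => (μ[Y1 (m + 1)|ℱ m]) ω - (μ[Y0 (m + 1)|ℱ m]) ω := by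
      have := condExp_sub (m := ℱ m) (μ := μ) (hint1 (m + 1)) (hint0 (m + 1))
      filter_upwards [this] with ω h using h
    filter_upwards [hrec0 m hm, hrec1 m hm, hpos m, hsub] with ω h0 h1 hp hs
    rw [h0, h1, hs]
    set a := (μ[Y0 (m + 1)|ℱ m]) ω
    set b := (μ[Y1 (m + 1)|ℱ m]) ω
    simp only [min_def, max_def]
    split_ifs <;> linarith
end

section
/- In the discrete finite-horizon setting, the value process (V̂_m) defined by V̂_M = Γ and V̂_m = min( γ₋(t_m), max( −γ₊(t_m), E[V̂_{m+1}|F_{t_m}] ) ) satisfies, with σ* := min{ m : V̂_m = γ₋(t_m) } ∧ M and τ* := min{ m : V̂_m = −γ₊(t_m) } ∧ M, that the stopped process (V̂_{m ∧ σ* ∧ τ*})_m is a martingale. -/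
/-!
Up to `σ* ∧ τ*` the value process stays strictly between the barriers, so there the recursion
reads `V̂ₙ = E[V̂ₙ₊₁ | ℱₙ]`. The increment of the stopped process from `n` to `n + 1` is
`𝟙{n < σ* ∧ τ*} (V̂ₙ₊₁ - V̂ₙ)`, with an `ℱₙ`-measurable indicator, so its conditional expectation
vanishes. The hitting times are stopping times since `V̂` and the barriers are adapted.
-/

open MeasureTheory

theorem eq_of_eq_min_max_of_ne {α : Type*} [LinearOrder α] {x a b c : α}
    (h : x = min a (max b c)) (ha : x ≠ a) (hb : x ≠ b) : x = c := by
  rcases min_choice a (max b c) with hmin | hmin <;> rw [hmin] at h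
  · exact absurd h ha
  rcases max_choice b c with hmax | hmax <;> rw [hmax] at h
  · exact absurd h hb
  · exact h

namespace MeasureTheory

variable {Ω : Type*} {m0 : MeasurableSpace Ω}

theorem lt_and_not_of_lt_sInf_eq_or {p : ℕ → Prop} {M n : ℕ}
    (h : n < sInf {m | m = M ∨ p m}) : n < M ∧ ¬p n :=
  ⟨h.trans_le (Nat.sInf_le (Or.inl rfl)), fun hp => Nat.notMem_of_lt_sInf h (Or.inr hp)⟩

theorem isStoppingTime_sInf_eq_or {ℱ : Filtration ℕ m0} {p : ℕ → Ω → Prop}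
    (hp : ∀ m, MeasurableSet[ℱ m] {ω | p m ω}) (M : ℕ) :
    IsStoppingTime ℱ fun ω => ((sInf {m | m = M ∨ p m ω} : ℕ) : WithTop ℕ) := by
  intro n
  have hunion : {ω | sInf {m | m = M ∨ p m ω} ≤ n}
      = ⋃ m ∈ Set.Iic n, {ω | m = M ∨ p m ω} := by
    ext ω
    simp only [Set.mem_ofPred_eq, Set.mem_iUnion, Set.mem_Iic, exists_prop]
    exact ⟨fun h => ⟨_, h, Nat.sInf_mem (s := {m | m = M ∨ p m ω}) ⟨M, Or.inl rfl⟩⟩,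
      fun ⟨m, hmn, hm⟩ => (Nat.sInf_le hm).trans hmn⟩
  -- the cast in the statement is `Nat.cast`, while `IsStoppingTime` compares via `WithTop.some`
  change MeasurableSet[ℱ n] {ω | WithTop.some (sInf {m | m = M ∨ p m ω}) ≤ WithTop.some n}
  simp only [WithTop.coe_le_coe, hunion]
  exact MeasurableSet.biUnion (Set.to_countable _) fun m hmn =>
    (MeasurableSet.const (m = M)).union (ℱ.mono hmn _ (hp m))

theorem stoppedProcess_add_one {E : Type*} [AddCommGroup E] (u : ℕ → Ω → E)
    (τ : Ω → WithTop ℕ) (n : ℕ) :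
    stoppedProcess u τ (n + 1)
      = stoppedProcess u τ n + {ω | (n : WithTop ℕ) < τ ω}.indicator (u (n + 1) - u n) := by
  ext ω
  by_cases h : ω ∈ {ω | (n : WithTop ℕ) < τ ω}
  · have hn : WithTop.some n ≤ τ ω := le_of_lt h
    have hn1 : WithTop.some (n + 1) ≤ τ ω := ENat.natCast_add_one_le_iff.mpr h
    rw [Pi.add_apply, stoppedProcess_eq_of_le hn1, stoppedProcess_eq_of_le hn,
      Set.indicator_of_mem h, Pi.sub_apply, add_sub_cancel]
  · have hn : τ ω ≤ WithTop.some n := not_lt.mp h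
    have hn1 : τ ω ≤ WithTop.some (n + 1) := hn.trans (WithTop.coe_le_coe.mpr n.le_succ)
    rw [Pi.add_apply, stoppedProcess_eq_of_ge hn, stoppedProcess_eq_of_ge hn1,
      Set.indicator_of_notMem h, add_zero]

theorem martingale_stoppedProcess_of_condExp_eq {E : Type*} [NormedAddCommGroup E]
    [NormedSpace ℝ E] [CompleteSpace E] {μ : Measure Ω} [IsFiniteMeasure μ]
    {ℱ : Filtration ℕ m0} {u : ℕ → Ω → E} {τ : Ω → WithTop ℕ}
    (hu : StronglyAdapted ℱ u) (hint : ∀ n, Integrable (u n) μ) (hτ : IsStoppingTime ℱ τ)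
    (hcond : ∀ n : ℕ, ∀ᵐ ω ∂μ, (n : WithTop ℕ) < τ ω → μ[u (n + 1)|ℱ n] ω = u n ω) :
    Martingale (stoppedProcess u τ) ℱ μ := by
  refine martingale_nat (hu.stoppedProcess_of_discrete hτ) (integrable_stoppedProcess hτ hint)
    fun n => ?_
  set S := {ω | (n : WithTop ℕ) < τ ω}
  have hS : MeasurableSet[ℱ n] S := by
    have hgt := (hτ n).compl
    simp only [Set.compl_ofPred, not_le] at hgt
    exact hgt
  have hincr : Integrable (u (n + 1) - u n) μ := (hint (n + 1)).sub (hint n)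
  have hdrift : μ[u (n + 1) - u n|ℱ n] =ᵐ[μ] μ[u (n + 1)|ℱ n] - u n :=
    (condExp_sub (hint (n + 1)) (hint n) _).trans <| by
      rw [condExp_of_stronglyMeasurable (ℱ.le n) (hu n) (hint n)]
  have hS_drift : S.indicator (μ[u (n + 1) - u n|ℱ n]) =ᵐ[μ] 0 := by
    filter_upwards [hdrift, hcond n] with ω hω hωS
    by_cases h : ω ∈ S
    · simp [Set.indicator_of_mem h, hω, hωS h]
    · simp [Set.indicator_of_notMem h]
  rw [stoppedProcess_add_one]
  refine ((condExp_add (integrable_stoppedProcess hτ hint n)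
    (hincr.indicator (ℱ.le n _ hS)) _).trans ?_).symm
  rw [condExp_of_stronglyMeasurable (ℱ.le n) (hu.stoppedProcess_of_discrete hτ n)
    (integrable_stoppedProcess hτ hint n)]
  filter_upwards [condExp_indicator hincr hS, hS_drift] with ω h1 h2
  simp [h1, h2]

end MeasureTheory

theorem stopped_value_is_martingale_general {Ω : Type*} {m0 : MeasurableSpace Ω}
    (μ : Measure Ω) [IsProbabilityMeasure μ] (ℱ : Filtration ℕ m0) (M : ℕ)
    (γminus γplus : ℕ → Ω → ℝ) (V : ℕ → Ω → ℝ)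
    (hadapted : Adapted ℱ V) (hint : ∀ m, Integrable (V m) μ)
    (hγm : ∀ m, StronglyMeasurable[ℱ m] (γminus m))
    (hγp : ∀ m, StronglyMeasurable[ℱ m] (γplus m))
    (hrec : ∀ m < M, ∀ᵐ ω ∂μ,
      V m ω = min (γminus m ω) (max (-γplus m ω) ((μ[V (m + 1)|ℱ m]) ω)))
    (σs τs : Ω → ℕ)
    (hσs : ∀ ω, σs ω = sInf {m : ℕ | m = M ∨ V m ω = γminus m ω})
    (hτs : ∀ ω, τs ω = sInf {m : ℕ | m = M ∨ V m ω = -γplus m ω}) :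
    Martingale (stoppedProcess V fun ω => min (σs ω) (τs ω)) ℱ μ := by
  obtain rfl : σs = _ := funext hσs
  obtain rfl : τs = _ := funext hτs
  have hσ := isStoppingTime_sInf_eq_or (p := fun m ω => V m ω = γminus m ω)
    (fun m => measurableSet_eq_fun (hadapted m) (hγm m).measurable) M
  have hτ := isStoppingTime_sInf_eq_or (p := fun m ω => V m ω = -γplus m ω)
    (fun m => measurableSet_eq_fun (hadapted m) (hγp m).measurable.neg) M
  refine martingale_stoppedProcess_of_condExp_eq hadapted.stronglyAdapted hint (hσ.min hτ)
    fun n => ?_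
  rcases lt_or_ge n M with hn | hn
  · filter_upwards [hrec n hn] with ω hω hlt
    rw [lt_min_iff, Nat.cast_lt, Nat.cast_lt] at hlt
    exact (eq_of_eq_min_max_of_ne hω (lt_and_not_of_lt_sInf_eq_or hlt.1).2
      (lt_and_not_of_lt_sInf_eq_or hlt.2).2).symm
  · refine ae_of_all _ fun ω hlt => ?_
    rw [lt_min_iff, Nat.cast_lt] at hlt
    exact absurd (lt_and_not_of_lt_sInf_eq_or hlt.1).1 hn.not_gt

/-- The Dynkin game value process stopped at `σ* ∧ τ*`, where `σ*` and `τ*` are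
the first hitting times (capped at `M`) of the upper and lower barriers, is a
martingale. -/
theorem stopped_value_is_martingale {Ω : Type*} {m0 : MeasurableSpace Ω}
    (μ : Measure Ω) [IsProbabilityMeasure μ] (ℱ : Filtration ℕ m0) (M : ℕ)
    (γminus γplus : ℕ → Ω → ℝ) (V : ℕ → Ω → ℝ) (Γ : Ω → ℝ)
    (hadapted : Adapted ℱ V) (hint : ∀ m, Integrable (V m) μ)
    (hγm : ∀ m, StronglyMeasurable[ℱ m] (γminus m))
    (hγp : ∀ m, StronglyMeasurable[ℱ m] (γplus m))
    (hpos : ∀ m, ∀ᵐ ω ∂μ, 0 < γminus m ω + γplus m ω)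
    (hΓ : ∀ᵐ ω ∂μ, -γplus M ω ≤ Γ ω ∧ Γ ω ≤ γminus M ω)
    (hterm : V M = Γ)
    (hrec : ∀ m < M, ∀ᵐ ω ∂μ,
      V m ω = min (γminus m ω) (max (-γplus m ω) ((μ[V (m + 1)|ℱ m]) ω)))
    (σs τs : Ω → ℕ)
    (hσs : ∀ ω, σs ω = sInf {m : ℕ | m = M ∨ V m ω = γminus m ω})
    (hτs : ∀ ω, τs ω = sInf {m : ℕ | m = M ∨ V m ω = -γplus m ω}) :
    Martingale (stoppedProcess V fun ω => min (σs ω) (τs ω)) ℱ μ :=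
  stopped_value_is_martingale_general μ ℱ M γminus γplus V hadapted hint hγm hγp hrec σs τs hσs hτs
end

section
/- In the discrete Dynkin game with payoff D(σ,τ) = E[ γ₋(t_σ)·1{σ ≤ τ, σ < M} − γ₊(t_τ)·1{τ < σ} + Γ·1{σ = τ = M} ], the pair (σ*, τ*) of first hitting times of the barriers by the recursively defined value V̂ is a saddle point, and V̂_0 = D(σ*, τ*). -/
/-!
Strictly before `σ*` the minimum with the upper barrier is inactive in the recursion, so
`V̂_m = max (-γ₊(t_m)) E[V̂_{m+1} | F_{t_m}] ≥ E[V̂_{m+1} | F_{t_m}]`; strictly before `τ*`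
the maximum with the lower barrier is inactive and, as `-γ₊ ≤ γ₋`,
`V̂_m ≤ E[V̂_{m+1} | F_{t_m}]`. Telescoping `V̂` along a bounded stopping time `ρ` writes
`E[V̂_ρ] - V̂_0` as the sum over `m` of the integrals of `E[V̂_{m+1} | F_{t_m}] - V̂_m` over
`{m < ρ}`, hence `E[V̂_{σ* ∧ τ}] ≤ V̂_0 ≤ E[V̂_{σ ∧ τ*}]`. Pointwise, the payoff of `(σ*, τ)` is
at most `V̂_{σ* ∧ τ}` and that of `(σ, τ*)` at least `V̂_{σ ∧ τ*}`: `V̂` equals each barrier at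
its hitting time, `V̂ ≤ γ₋` always, and `V̂ ≥ -γ₊` before `σ*`. Taking `σ = σ*` and `τ = τ*`
gives `D(σ*, τ*) = V̂_0`.
-/

open MeasureTheory

section HittingTime

variable {Ω : Type*} {m0 : MeasurableSpace Ω}

noncomputable def cappedHittingTime (M : ℕ) (p : ℕ → Ω → Prop) (ω : Ω) : ℕ :=
  sInf {m | m = M ∨ p m ω}

variable {M : ℕ} {p : ℕ → Ω → Prop} {ω : Ω}

lemma cappedHittingTime_le_iff {i : ℕ} :
    cappedHittingTime M p ω ≤ i ↔ ∃ j ≤ i, j = M ∨ p j ω :=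
  ⟨fun h => ⟨_, h, Nat.sInf_mem (s := {m | m = M ∨ p m ω}) ⟨M, Or.inl rfl⟩⟩,
    fun ⟨_, hj, hS⟩ => (Nat.sInf_le hS).trans hj⟩

lemma cappedHittingTime_le : cappedHittingTime M p ω ≤ M :=
  cappedHittingTime_le_iff.2 ⟨M, le_rfl, Or.inl rfl⟩

lemma cappedHittingTime_spec (h : cappedHittingTime M p ω < M) :
    p (cappedHittingTime M p ω) ω :=
  (Nat.sInf_mem (s := {m | m = M ∨ p m ω}) ⟨M, Or.inl rfl⟩).resolve_left h.ne

lemma not_of_lt_cappedHittingTime {m : ℕ} (h : m < cappedHittingTime M p ω) : ¬p m ω :=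
  fun hp => (cappedHittingTime_le_iff.2 ⟨m, le_rfl, Or.inr hp⟩).not_gt h

lemma isStoppingTime_cappedHittingTime {ℱ : Filtration ℕ m0}
    (hp : ∀ m, MeasurableSet[ℱ m] {ω | p m ω}) :
    IsStoppingTime ℱ fun ω => (cappedHittingTime M p ω : WithTop ℕ) := by
  intro i
  have hset :
      {ω | cappedHittingTime M p ω ≤ i} = ⋃ j ≤ i, ({_ω | j = M} ∪ {ω | p j ω}) := by
    ext ω; simp [cappedHittingTime_le_iff]
  simp only [Nat.cast_withTop, WithTop.coe_le_coe, hset]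
  exact .biUnion (Set.to_countable _) fun j hj =>
    (MeasurableSet.const _).union (ℱ.mono hj _ (hp j))

end HittingTime

section Telescoping

variable {Ω : Type*} {m0 : MeasurableSpace Ω} {μ : Measure Ω} {ℱ : Filtration ℕ m0}

lemma MeasureTheory.IsStoppingTime.measurableSet_nat_gt {ρ : Ω → ℕ}
    (hρ : IsStoppingTime ℱ fun ω => (ρ ω : WithTop ℕ)) (m : ℕ) :
    MeasurableSet[ℱ m] {ω | m < ρ ω} := by
  simpa using hρ.measurableSet_gt m

lemma MeasureTheory.IsStoppingTime.nat_min {σ τ : Ω → ℕ}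
    (hσ : IsStoppingTime ℱ fun ω => (σ ω : WithTop ℕ))
    (hτ : IsStoppingTime ℱ fun ω => (τ ω : WithTop ℕ)) :
    IsStoppingTime ℱ fun ω => (min (σ ω) (τ ω) : WithTop ℕ) := by
  simpa only [Nat.cast_min] using hσ.min hτ

lemma MeasureTheory.IsStoppingTime.measurableSet_nat_eq {ρ : Ω → ℕ}
    (hρ : IsStoppingTime ℱ fun ω => (ρ ω : WithTop ℕ)) (m : ℕ) :
    MeasurableSet {ω | ρ ω = m} :=
  ℱ.le m _ (by simpa using hρ.measurableSet_eq m)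

lemma comp_eq_add_sum_indicator {E : Type*} [AddCommGroup E] (f : ℕ → Ω → E) {ρ : Ω → ℕ}
    {M : ℕ} (hρ : ∀ ω, ρ ω ≤ M) :
    (fun ω => f (ρ ω) ω) =
      fun ω => f 0 ω + ∑ m ∈ Finset.range M, {ω | m < ρ ω}.indicator (f (m + 1) - f m) ω := by
  funext ω
  have hfilter : (Finset.range M).filter (· < ρ ω) = Finset.range (ρ ω) := by
    have := hρ ω
    ext m
    simp only [Finset.mem_filter, Finset.mem_range]
    omega
  simp only [Pi.sub_apply, Set.indicator_apply, Set.mem_ofPred_eq]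
  rw [← Finset.sum_filter, hfilter, Finset.sum_range_sub (fun m => f m ω)]
  simp

lemma integrable_comp_of_forall_mem {ι E : Type*} [NormedAddCommGroup E] {f : ι → Ω → E}
    {ρ : Ω → ι} (s : Finset ι) (hρs : ∀ ω, ρ ω ∈ s)
    (hρ : ∀ i ∈ s, MeasurableSet {ω | ρ ω = i}) (hf : ∀ i ∈ s, Integrable (f i) μ) :
    Integrable (fun ω => f (ρ ω) ω) μ := by
  have hsum :
      (fun ω => f (ρ ω) ω) = fun ω => ∑ i ∈ s, {ω | ρ ω = i}.indicator (f i) ω := by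
    ext ω
    rw [Finset.sum_eq_single_of_mem (f := fun i => {ω | ρ ω = i}.indicator (f i) ω) _ (hρs ω)
      fun i _ hi => Set.indicator_of_notMem (s := {ω | ρ ω = i}) hi.symm _]
    exact (Set.indicator_of_mem (s := {ω | ρ ω = ρ ω}) rfl (f (ρ ω))).symm
  rw [hsum]
  exact integrable_finsetSum _ fun i hi => (hf i hi).indicator (hρ i hi)

lemma integrable_comp_of_isStoppingTime {V : ℕ → Ω → ℝ} {M : ℕ} {ρ : Ω → ℕ}
    (hint : ∀ m, Integrable (V m) μ) (hρ : IsStoppingTime ℱ fun ω => (ρ ω : WithTop ℕ))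
    (hρM : ∀ ω, ρ ω ≤ M) : Integrable (fun ω => V (ρ ω) ω) μ :=
  integrable_comp_of_forall_mem (Finset.range (M + 1))
    (fun ω => Finset.mem_range_succ_iff.2 (hρM ω)) (fun m _ => hρ.measurableSet_nat_eq m)
    fun m _ => hint m

variable [IsFiniteMeasure μ] {V : ℕ → Ω → ℝ} {M : ℕ} {ρ : Ω → ℕ}

lemma integral_comp_eq_add_sum_setIntegral_condExp_sub (hint : ∀ m, Integrable (V m) μ)
    (hρ : IsStoppingTime ℱ fun ω => (ρ ω : WithTop ℕ)) (hρM : ∀ ω, ρ ω ≤ M) :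
    ∫ ω, V (ρ ω) ω ∂μ = ∫ ω, V 0 ω ∂μ +
      ∑ m ∈ Finset.range M, ∫ ω in {ω | m < ρ ω}, (μ[V (m + 1)|ℱ m] ω - V m ω) ∂μ := by
  have hA m : MeasurableSet {ω | m < ρ ω} := ℱ.le m _ (hρ.measurableSet_nat_gt m)
  have hincr m : Integrable (V (m + 1) - V m) μ := (hint (m + 1)).sub (hint m)
  rw [comp_eq_add_sum_indicator V hρM, integral_add (hint 0)
      (integrable_finsetSum _ fun m _ => (hincr m).indicator (hA m)),
    integral_finsetSum _ fun m _ => (hincr m).indicator (hA m)]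
  congr 1
  refine Finset.sum_congr rfl fun m _ => ?_
  -- `{m < ρ}` is `ℱ m`-measurable, so `V (m + 1)` may be replaced by its conditional expectation.
  rw [integral_indicator (hA m),
    integral_sub integrable_condExp.integrableOn (hint m).integrableOn,
    setIntegral_condExp (ℱ.le m) (hint (m + 1)) (hρ.measurableSet_nat_gt m),
    ← integral_sub (hint (m + 1)).integrableOn (hint m).integrableOn]
  rfl

lemma integral_comp_le_of_condExp_le (hint : ∀ m, Integrable (V m) μ)
    (hρ : IsStoppingTime ℱ fun ω => (ρ ω : WithTop ℕ)) (hρM : ∀ ω, ρ ω ≤ M)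
    (hsuper : ∀ m < M, ∀ᵐ ω ∂μ, m < ρ ω → μ[V (m + 1)|ℱ m] ω ≤ V m ω) :
    ∫ ω, V (ρ ω) ω ∂μ ≤ ∫ ω, V 0 ω ∂μ := by
  rw [integral_comp_eq_add_sum_setIntegral_condExp_sub hint hρ hρM, add_le_iff_nonpos_right]
  refine Finset.sum_nonpos fun m hm =>
    setIntegral_nonpos_ae (ℱ.le m _ (hρ.measurableSet_nat_gt m)) ?_
  filter_upwards [hsuper m (Finset.mem_range.1 hm)] with ω h hω using sub_nonpos.2 (h hω)

lemma integral_le_integral_comp_of_le_condExp (hint : ∀ m, Integrable (V m) μ)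
    (hρ : IsStoppingTime ℱ fun ω => (ρ ω : WithTop ℕ)) (hρM : ∀ ω, ρ ω ≤ M)
    (hsub : ∀ m < M, ∀ᵐ ω ∂μ, m < ρ ω → V m ω ≤ μ[V (m + 1)|ℱ m] ω) :
    ∫ ω, V 0 ω ∂μ ≤ ∫ ω, V (ρ ω) ω ∂μ := by
  rw [integral_comp_eq_add_sum_setIntegral_condExp_sub hint hρ hρM, le_add_iff_nonneg_right]
  refine Finset.sum_nonneg fun m hm =>
    setIntegral_nonneg_ae (ℱ.le m _ (hρ.measurableSet_nat_gt m)) ?_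
  filter_upwards [hsub m (Finset.mem_range.1 hm)] with ω h hω using sub_nonneg.2 (h hω)

end Telescoping

lemma min_max_le_of_ne {α : Type*} [LinearOrder α] {a b c : α} (hba : b ≤ a)
    (h : min a (max b c) ≠ b) : min a (max b c) ≤ c := by
  rcases le_total c b with hcb | hbc
  · exact absurd (by rw [max_eq_left hcb, min_eq_right hba]) h
  · exact (min_le_right _ _).trans (max_eq_right hbc).le

section DynkinGame

variable {Ω : Type*} {m0 : MeasurableSpace Ω} {μ : Measure Ω} {ℱ : Filtration ℕ m0} {M : ℕ}
  {γminus γplus : ℕ → Ω → ℝ}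

def dynkinPayoff (M : ℕ) (γminus γplus : ℕ → Ω → ℝ) (Γ : Ω → ℝ) (i j : ℕ) (ω : Ω) : ℝ :=
  (if i ≤ j ∧ i < M then γminus i ω else 0) + (if j < i then -γplus j ω else 0)
    + (if i = M ∧ j = M then Γ ω else 0)

lemma integrable_dynkinPayoff {Γ : Ω → ℝ} (hγm : ∀ m, Integrable (γminus m) μ)
    (hγp : ∀ m, Integrable (γplus m) μ) (hΓ : Integrable Γ μ) {σ τ : Ω → ℕ}
    (hσ : IsStoppingTime ℱ fun ω => (σ ω : WithTop ℕ)) (hσM : ∀ ω, σ ω ≤ M)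
    (hτ : IsStoppingTime ℱ fun ω => (τ ω : WithTop ℕ)) (hτM : ∀ ω, τ ω ≤ M) :
    Integrable (fun ω => dynkinPayoff M γminus γplus Γ (σ ω) (τ ω) ω) μ := by
  let s := Finset.range (M + 1) ×ˢ Finset.range (M + 1)
  refine integrable_comp_of_forall_mem (f := fun ij => dynkinPayoff M γminus γplus Γ ij.1 ij.2)
    (ρ := fun ω => (σ ω, τ ω)) s (fun ω => ?_) (fun ij _ => ?_) (fun ij _ => ?_)
  · simp [s, hσM ω, hτM ω]
  · simpa only [Prod.ext_iff, Set.ofPred_and] using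
      (hσ.measurableSet_nat_eq ij.1).inter (hτ.measurableSet_nat_eq ij.2)
  · unfold dynkinPayoff
    refine (Integrable.add ?_ ?_).add ?_ <;> split_ifs <;> simp [hγm, hγp, hΓ]

section Evaluation

variable {Γ : Ω → ℝ} {i j : ℕ} {ω : Ω}

lemma dynkinPayoff_of_lt (h : j < i) : dynkinPayoff M γminus γplus Γ i j ω = -γplus j ω := by
  simp [dynkinPayoff, h, h.not_ge]
  omega

lemma dynkinPayoff_of_le_of_lt (hij : i ≤ j) (hi : i < M) :
    dynkinPayoff M γminus γplus Γ i j ω = γminus i ω := by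
  simp [dynkinPayoff, hij, hi, hij.not_gt, hi.ne]

lemma dynkinPayoff_self : dynkinPayoff M γminus γplus Γ M M ω = Γ ω := by
  simp [dynkinPayoff]

end Evaluation

variable {V : ℕ → Ω → ℝ} {i j : ℕ} {ω : Ω}

lemma dynkinPayoff_le (hj : j ≤ M) (hi : i < M → i ≤ j → γminus i ω ≤ V i ω)
    (hji : j < i → -γplus j ω ≤ V j ω) :
    dynkinPayoff M γminus γplus (V M) i j ω ≤ V (min i j) ω := by
  rcases lt_or_ge j i with hji' | hij
  · rw [dynkinPayoff_of_lt hji', min_eq_right hji'.le]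
    exact hji hji'
  rcases lt_or_ge i M with hiM | hMi
  · rw [dynkinPayoff_of_le_of_lt hij hiM, min_eq_left hij]
    exact hi hiM hij
  obtain ⟨rfl, rfl⟩ : i = M ∧ j = M := by omega
  rw [dynkinPayoff_self, min_self]

lemma le_dynkinPayoff (hj : j ≤ M) (hi : i < M → i ≤ j → V i ω ≤ γminus i ω)
    (hji : j < i → V j ω ≤ -γplus j ω) :
    V (min i j) ω ≤ dynkinPayoff M γminus γplus (V M) i j ω := by
  rcases lt_or_ge j i with hji' | hij
  · rw [dynkinPayoff_of_lt hji', min_eq_right hji'.le]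
    exact hji hji'
  rcases lt_or_ge i M with hiM | hMi
  · rw [dynkinPayoff_of_le_of_lt hij hiM, min_eq_left hij]
    exact hi hiM hij
  obtain ⟨rfl, rfl⟩ : i = M ∧ j = M := by omega
  rw [dynkinPayoff_self, min_self]

variable [IsFiniteMeasure μ]

theorem integral_dynkinPayoff_upperHittingTime_le (hint : ∀ m, Integrable (V m) μ)
    (hγm : ∀ m, Integrable (γminus m) μ) (hγp : ∀ m, Integrable (γplus m) μ)
    (hrec : ∀ m < M, ∀ᵐ ω ∂μ,
      V m ω = min (γminus m ω) (max (-γplus m ω) ((μ[V (m + 1)|ℱ m]) ω)))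
    (hσ : IsStoppingTime ℱ fun ω =>
      (cappedHittingTime M (fun m ω => V m ω = γminus m ω) ω : WithTop ℕ))
    {τ : Ω → ℕ} (hτ : IsStoppingTime ℱ fun ω => (τ ω : WithTop ℕ)) (hτM : ∀ ω, τ ω ≤ M) :
    ∫ ω, dynkinPayoff M γminus γplus (V M)
      (cappedHittingTime M (fun m ω => V m ω = γminus m ω) ω) (τ ω) ω ∂μ ≤ ∫ ω, V 0 ω ∂μ := by
  set σ := cappedHittingTime M (fun m ω => V m ω = γminus m ω)
  have hσM ω : σ ω ≤ M := cappedHittingTime_le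
  have hbefore : ∀ᵐ ω ∂μ, ∀ m < σ ω, V m ω = max (-γplus m ω) ((μ[V (m + 1)|ℱ m]) ω) := by
    filter_upwards [(Set.finite_Iio M).eventually_all.2 hrec] with ω hω m hm
    have hne : V m ω ≠ γminus m ω := not_of_lt_cappedHittingTime hm
    rw [hω m (hm.trans_le (hσM ω))] at hne ⊢
    exact (min_choice _ _).resolve_left hne
  calc ∫ ω, dynkinPayoff M γminus γplus (V M) (σ ω) (τ ω) ω ∂μ
      ≤ ∫ ω, V (min (σ ω) (τ ω)) ω ∂μ := by
        refine integral_mono_ae (integrable_dynkinPayoff hγm hγp (hint M) hσ hσM hτ hτM)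
          (integrable_comp_of_isStoppingTime hint (hσ.nat_min hτ)
            fun ω => min_le_of_left_le (hσM ω)) ?_
        filter_upwards [hbefore] with ω hω
        refine dynkinPayoff_le (hτM ω) (fun hσlt _ => (cappedHittingTime_spec hσlt).ge)
          fun hτσ => ?_
        rw [hω _ hτσ]
        exact le_max_left _ _
    _ ≤ ∫ ω, V 0 ω ∂μ := by
        refine integral_comp_le_of_condExp_le hint (hσ.nat_min hτ)
          (fun ω => min_le_of_left_le (hσM ω)) fun m _ => ?_
        filter_upwards [hbefore] with ω hω hm
        rw [hω m (lt_min_iff.1 hm).1]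
        exact le_max_right _ _

theorem integral_le_integral_dynkinPayoff_lowerHittingTime (hint : ∀ m, Integrable (V m) μ)
    (hγm : ∀ m, Integrable (γminus m) μ) (hγp : ∀ m, Integrable (γplus m) μ)
    (hbarrier : ∀ m < M, ∀ᵐ ω ∂μ, -γplus m ω ≤ γminus m ω)
    (hrec : ∀ m < M, ∀ᵐ ω ∂μ,
      V m ω = min (γminus m ω) (max (-γplus m ω) ((μ[V (m + 1)|ℱ m]) ω)))
    (hτ : IsStoppingTime ℱ fun ω =>
      (cappedHittingTime M (fun m ω => V m ω = -γplus m ω) ω : WithTop ℕ))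
    {σ : Ω → ℕ} (hσ : IsStoppingTime ℱ fun ω => (σ ω : WithTop ℕ)) (hσM : ∀ ω, σ ω ≤ M) :
    ∫ ω, V 0 ω ∂μ ≤ ∫ ω, dynkinPayoff M γminus γplus (V M)
      (σ ω) (cappedHittingTime M (fun m ω => V m ω = -γplus m ω) ω) ω ∂μ := by
  set τ := cappedHittingTime M (fun m ω => V m ω = -γplus m ω)
  have hτM ω : τ ω ≤ M := cappedHittingTime_le
  have hrec' := (Set.finite_Iio M).eventually_all.2 hrec
  have hbefore : ∀ᵐ ω ∂μ, ∀ m < τ ω, V m ω ≤ (μ[V (m + 1)|ℱ m]) ω := by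
    filter_upwards [hrec', (Set.finite_Iio M).eventually_all.2 hbarrier]
      with ω hω hωb m hm
    have hmM : m < M := hm.trans_le (hτM ω)
    have hne : V m ω ≠ -γplus m ω := not_of_lt_cappedHittingTime hm
    rw [hω m hmM] at hne ⊢
    exact min_max_le_of_ne (hωb m hmM) hne
  calc ∫ ω, V 0 ω ∂μ ≤ ∫ ω, V (min (σ ω) (τ ω)) ω ∂μ := by
        refine integral_le_integral_comp_of_le_condExp hint (hσ.nat_min hτ)
          (fun ω => min_le_of_left_le (hσM ω)) fun m _ => ?_
        filter_upwards [hbefore] with ω hω hm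
        exact hω m (lt_min_iff.1 hm).2
    _ ≤ ∫ ω, dynkinPayoff M γminus γplus (V M) (σ ω) (τ ω) ω ∂μ := by
        refine integral_mono_ae (integrable_comp_of_isStoppingTime hint (hσ.nat_min hτ)
            fun ω => min_le_of_left_le (hσM ω))
          (integrable_dynkinPayoff hγm hγp (hint M) hσ hσM hτ hτM) ?_
        filter_upwards [hrec'] with ω hω
        refine le_dynkinPayoff (hτM ω) (fun hσlt _ => ?_)
          fun hτσ => (cappedHittingTime_spec (hτσ.trans_le (hσM ω))).le
        rw [hω _ hσlt]
        exact min_le_left _ _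

end DynkinGame

theorem discrete_dynkin_game_saddle_point_general {Ω : Type*} {m0 : MeasurableSpace Ω}
    (μ : Measure Ω) [IsProbabilityMeasure μ] (ℱ : Filtration ℕ m0) (M : ℕ)
    (γminus γplus : ℕ → Ω → ℝ) (V : ℕ → Ω → ℝ) (Γ : Ω → ℝ)
    (hadapted : Adapted ℱ V) (hint : ∀ m, Integrable (V m) μ)
    (hγm : ∀ m, StronglyMeasurable[ℱ m] (γminus m))
    (hγp : ∀ m, StronglyMeasurable[ℱ m] (γplus m))
    (hγmint : ∀ m, Integrable (γminus m) μ) (hγpint : ∀ m, Integrable (γplus m) μ)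
    (htrivial : ℱ 0 = (⊥ : MeasurableSpace Ω))
    (hpos : ∀ m, ∀ᵐ ω ∂μ, 0 < γminus m ω + γplus m ω)
    (hterm : V M = Γ)
    (hrec : ∀ m < M, ∀ᵐ ω ∂μ,
      V m ω = min (γminus m ω) (max (-γplus m ω) ((μ[V (m + 1)|ℱ m]) ω)))
    (σs τs : Ω → ℕ)
    (hσs : ∀ ω, σs ω = sInf {m : ℕ | m = M ∨ V m ω = γminus m ω})
    (hτs : ∀ ω, τs ω = sInf {m : ℕ | m = M ∨ V m ω = -γplus m ω})
    (D : (Ω → ℕ) → (Ω → ℕ) → ℝ)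
    (hD : ∀ σ τ : Ω → ℕ, D σ τ =
      ∫ ω, ((if σ ω ≤ τ ω ∧ σ ω < M then γminus (σ ω) ω else 0)
        + (if τ ω < σ ω then -γplus (τ ω) ω else 0)
        + (if σ ω = M ∧ τ ω = M then Γ ω else 0)) ∂μ) :
    (∀ σ τ : Ω → ℕ, IsStoppingTime ℱ (fun ω => (σ ω : WithTop ℕ)) → (∀ ω, σ ω ≤ M) →
        IsStoppingTime ℱ (fun ω => (τ ω : WithTop ℕ)) → (∀ ω, τ ω ≤ M) →
      D σs τ ≤ D σs τs ∧ D σs τs ≤ D σ τs) ∧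
    (∀ᵐ ω ∂μ, V 0 ω = D σs τs) := by
  subst hterm
  obtain rfl : σs = cappedHittingTime M (fun m ω => V m ω = γminus m ω) := funext hσs
  obtain rfl : τs = cappedHittingTime M (fun m ω => V m ω = -γplus m ω) := funext hτs
  set σs := cappedHittingTime M (fun m ω => V m ω = γminus m ω)
  set τs := cappedHittingTime M (fun m ω => V m ω = -γplus m ω)
  have hσST : IsStoppingTime ℱ fun ω => (σs ω : WithTop ℕ) := isStoppingTime_cappedHittingTime
    fun m => measurableSet_eq_fun (hadapted m) (hγm m).measurable
  have hτST : IsStoppingTime ℱ fun ω => (τs ω : WithTop ℕ) := isStoppingTime_cappedHittingTime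
    fun m => measurableSet_eq_fun (hadapted m) (hγp m).measurable.neg
  have hbarrier m (_ : m < M) : ∀ᵐ ω ∂μ, -γplus m ω ≤ γminus m ω :=
    (hpos m).mono fun ω h => by linarith
  have upper τ hτ hτM : D σs τ ≤ ∫ ω, V 0 ω ∂μ := (hD _ _).trans_le
    (integral_dynkinPayoff_upperHittingTime_le hint hγmint hγpint hrec hσST hτ hτM)
  have lower σ hσ hσM : ∫ ω, V 0 ω ∂μ ≤ D σ τs :=
    (integral_le_integral_dynkinPayoff_lowerHittingTime hint hγmint hγpint hbarrier hrec hτST hσ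
      hσM).trans_eq (hD _ _).symm
  have hvalue : D σs τs = ∫ ω, V 0 ω ∂μ := le_antisymm
    (upper _ hτST fun _ => cappedHittingTime_le) (lower _ hσST fun _ => cappedHittingTime_le)
  refine ⟨fun σ τ hσ hσM hτ hτM => ⟨hvalue ▸ upper τ hτ hτM, hvalue ▸ lower σ hσ hσM⟩, ?_⟩
  obtain ⟨c, hc⟩ := stronglyMeasurable_bot_iff.1 (htrivial ▸ hadapted 0).stronglyMeasurable
  exact .of_forall fun ω => by simp [hvalue, hc]

/-- In the discrete Dynkin game, the first hitting times of the barriers by the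
recursively defined value `V̂` form a saddle point and `V̂_0` is the value
`D(σ*, τ*)` of the game. -/
theorem discrete_dynkin_game_saddle_point {Ω : Type*} {m0 : MeasurableSpace Ω}
    (μ : Measure Ω) [IsProbabilityMeasure μ] (ℱ : Filtration ℕ m0) (M : ℕ)
    (γminus γplus : ℕ → Ω → ℝ) (V : ℕ → Ω → ℝ) (Γ : Ω → ℝ)
    (hadapted : Adapted ℱ V) (hint : ∀ m, Integrable (V m) μ)
    (hγm : ∀ m, StronglyMeasurable[ℱ m] (γminus m))
    (hγp : ∀ m, StronglyMeasurable[ℱ m] (γplus m))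
    (hγmint : ∀ m, Integrable (γminus m) μ) (hγpint : ∀ m, Integrable (γplus m) μ)
    (htrivial : ℱ 0 = (⊥ : MeasurableSpace Ω))
    (hpos : ∀ m, ∀ᵐ ω ∂μ, 0 < γminus m ω + γplus m ω)
    (hΓint : Integrable Γ μ) (hΓmeas : StronglyMeasurable[ℱ M] Γ)
    (hΓ : ∀ᵐ ω ∂μ, -γplus M ω ≤ Γ ω ∧ Γ ω ≤ γminus M ω)
    (hterm : V M = Γ)
    (hrec : ∀ m < M, ∀ᵐ ω ∂μ,
      V m ω = min (γminus m ω) (max (-γplus m ω) ((μ[V (m + 1)|ℱ m]) ω)))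
    (σs τs : Ω → ℕ)
    (hσs : ∀ ω, σs ω = sInf {m : ℕ | m = M ∨ V m ω = γminus m ω})
    (hτs : ∀ ω, τs ω = sInf {m : ℕ | m = M ∨ V m ω = -γplus m ω})
    (D : (Ω → ℕ) → (Ω → ℕ) → ℝ)
    (hD : ∀ σ τ : Ω → ℕ, D σ τ =
      ∫ ω, ((if σ ω ≤ τ ω ∧ σ ω < M then γminus (σ ω) ω else 0)
        + (if τ ω < σ ω then -γplus (τ ω) ω else 0)
        + (if σ ω = M ∧ τ ω = M then Γ ω else 0)) ∂μ) :
    (∀ σ τ : Ω → ℕ, IsStoppingTime ℱ (fun ω => (σ ω : WithTop ℕ)) → (∀ ω, σ ω ≤ M) →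
        IsStoppingTime ℱ (fun ω => (τ ω : WithTop ℕ)) → (∀ ω, τ ω ≤ M) →
      D σs τ ≤ D σs τs ∧ D σs τs ≤ D σ τs) ∧
    (∀ᵐ ω ∂μ, V 0 ω = D σs τs) :=
  discrete_dynkin_game_saddle_point_general μ ℱ M γminus γplus V Γ hadapted hint hγm hγp hγmint
    hγpint htrivial hpos hterm hrec σs τs hσs hτs D hD
end

section
/- Discrete Snell envelope optimal stopping: with Z the discrete Snell envelope of an adapted integrable process G on {0,…,M}, the stopping time τ* := min{ m : Z_m = G_m } satisfies Z_0 = E[G_{τ*}] = sup over stopping times τ with values in {0,…,M} of E[G_τ], provided F_0 is trivial. -/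
/-!
`Z` dominates `G` and is a supermartingale, `Z m ≥ μ[Z (m + 1) | ℱ m]` pointwise; before `τ*` we
have `Z m ≠ G m`, which forces `Z m = μ[Z (m + 1) | ℱ m]`. Telescoping `Z τ - Z 0` over the
increments on the events `{i < τ} ∈ ℱ i` gives
`E[Z τ] - E[Z 0] = ∑ i < M, ∫ over {i < τ} of (μ[Z (i + 1) | ℱ i] - Z i)`,
which is `≤ 0` for every stopping time `τ ≤ M` and `= 0` for `τ*`. Hence
`E[G τ] ≤ E[Z τ] ≤ E[Z 0] = E[Z τ*] = E[G τ*]`.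
-/

open MeasureTheory
open Finset

namespace MeasureTheory

variable {Ω : Type*} {m0 : MeasurableSpace Ω} {μ : Measure Ω} {ℱ : Filtration ℕ m0}

theorem sub_eq_sum_indicator_lt (f : ℕ → Ω → ℝ) {τ : Ω → ℕ} {N : ℕ} {ω : Ω} (hτ : τ ω ≤ N) :
    f (τ ω) ω - f 0 ω =
      ∑ i ∈ range N, {ω | i < τ ω}.indicator (fun ω => f (i + 1) ω - f i ω) ω := by
  have hrange : (range N).filter (· < τ ω) = range (τ ω) := by
    ext i; simp only [mem_filter, mem_range]; omega
  simp only [Set.indicator_apply, Set.mem_ofPred_eq]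
  rw [← sum_filter, hrange, sum_range_sub (fun i => f i ω)]

theorem measurableSet_lt_of_isStoppingTime {τ : Ω → ℕ}
    (hτ : IsStoppingTime ℱ (fun ω => (τ ω : WithTop ℕ))) (i : ℕ) :
    MeasurableSet[ℱ i] {ω | i < τ ω} := by
  simpa using hτ.measurableSet_gt i

theorem integrable_indicator_lt_sub {f : ℕ → Ω → ℝ} {τ : Ω → ℕ} {i : ℕ}
    (hfi : Integrable (f i) μ) (hfi' : Integrable (f (i + 1)) μ)
    (hτ : IsStoppingTime ℱ (fun ω => (τ ω : WithTop ℕ))) :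
    Integrable ({ω | i < τ ω}.indicator fun ω => f (i + 1) ω - f i ω) μ :=
  (hfi'.sub hfi).indicator (ℱ.le i _ (measurableSet_lt_of_isStoppingTime hτ i))

theorem integrable_comp_of_isStoppingTime {f : ℕ → Ω → ℝ} {τ : Ω → ℕ} {N : ℕ}
    (hf : ∀ i ≤ N, Integrable (f i) μ) (hτ : IsStoppingTime ℱ (fun ω => (τ ω : WithTop ℕ)))
    (hbdd : ∀ ω, τ ω ≤ N) :
    Integrable (fun ω => f (τ ω) ω) μ := by
  have hdecomp : (fun ω => f (τ ω) ω) = fun ω =>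
      f 0 ω + ∑ i ∈ range N, {ω | i < τ ω}.indicator (fun ω => f (i + 1) ω - f i ω) ω := by
    funext ω; rw [← sub_eq_sum_indicator_lt f (hbdd ω)]; ring
  rw [hdecomp]
  refine (hf 0 N.zero_le).add (integrable_finsetSum _ fun i hi => ?_)
  exact integrable_indicator_lt_sub (hf i (mem_range.mp hi).le) (hf (i + 1) (mem_range.mp hi)) hτ

theorem integral_comp_sub_eq_sum_setIntegral_condExp [SigmaFiniteFiltration μ ℱ]
    {f : ℕ → Ω → ℝ} {τ : Ω → ℕ} {N : ℕ}
    (hf : ∀ i ≤ N, Integrable (f i) μ) (hτ : IsStoppingTime ℱ (fun ω => (τ ω : WithTop ℕ)))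
    (hbdd : ∀ ω, τ ω ≤ N) :
    ∫ ω, f (τ ω) ω ∂μ - ∫ ω, f 0 ω ∂μ =
      ∑ i ∈ range N, ∫ ω in {ω | i < τ ω}, (μ[f (i + 1)|ℱ i] ω - f i ω) ∂μ := by
  rw [← integral_sub (integrable_comp_of_isStoppingTime hf hτ hbdd) (hf 0 N.zero_le)]
  simp_rw [sub_eq_sum_indicator_lt f (hbdd _)]
  rw [integral_finsetSum]
  · refine sum_congr rfl fun i hi => ?_
    have hiN := mem_range.mp hi
    have hA := measurableSet_lt_of_isStoppingTime hτ i
    rw [integral_indicator (ℱ.le i _ hA),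
      integral_sub (hf (i + 1) hiN).integrableOn (hf i hiN.le).integrableOn,
      integral_sub integrable_condExp.integrableOn (hf i hiN.le).integrableOn,
      setIntegral_condExp (ℱ.le i) (hf (i + 1) hiN) hA]
  · exact fun i hi =>
      integrable_indicator_lt_sub (hf i (mem_range.mp hi).le) (hf (i + 1) (mem_range.mp hi)) hτ

noncomputable def firstEntry (s : ℕ → Set Ω) (M : ℕ) (ω : Ω) : ℕ :=
  sInf {m | m = M ∨ ω ∈ s m}

section firstEntry

variable {s : ℕ → Set Ω} {M : ℕ}

theorem firstEntry_le (ω : Ω) : firstEntry s M ω ≤ M :=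
  Nat.sInf_le (Or.inl rfl)

theorem firstEntry_eq_or_mem (ω : Ω) : firstEntry s M ω = M ∨ ω ∈ s (firstEntry s M ω) :=
  Nat.sInf_mem (⟨M, Or.inl rfl⟩ : {m | m = M ∨ ω ∈ s m}.Nonempty)

theorem notMem_of_lt_firstEntry {ω : Ω} {i : ℕ} (hi : i < firstEntry s M ω) : ω ∉ s i :=
  fun hmem => (Nat.notMem_of_lt_sInf hi) (Or.inr hmem)

theorem firstEntry_le_iff {ω : Ω} {n : ℕ} (hn : n < M) :
    firstEntry s M ω ≤ n ↔ ∃ k ≤ n, ω ∈ s k := by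
  constructor
  · intro hle
    refine ⟨_, hle, (firstEntry_eq_or_mem ω).resolve_left ?_⟩
    omega
  · rintro ⟨k, hk, hmem⟩
    exact (Nat.sInf_le (Or.inr hmem)).trans hk

theorem isStoppingTime_firstEntry (hs : ∀ k < M, MeasurableSet[ℱ k] (s k)) :
    IsStoppingTime ℱ (fun ω => (firstEntry s M ω : WithTop ℕ)) := by
  intro n
  suffices MeasurableSet[ℱ n] {ω | firstEntry s M ω ≤ n} by simpa using this
  rcases le_or_gt M n with hMn | hnM
  · simp only [fun ω => (firstEntry_le (s := s) ω).trans hMn, Set.ofPred_true,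
      MeasurableSet.univ]
  · have hset : {ω | firstEntry s M ω ≤ n} = ⋃ k ≤ n, s k := by
      ext ω; simp [firstEntry_le_iff hnM]
    rw [hset]
    exact MeasurableSet.iUnion fun k => MeasurableSet.iUnion fun hk =>
      ℱ.mono hk _ (hs k (by omega))

end firstEntry

structure IsSnellEnvelope (μ : Measure Ω) (ℱ : Filtration ℕ m0) (M : ℕ) (G Z : ℕ → Ω → ℝ) :
    Prop where
  terminal : Z M = G M
  step : ∀ m < M, Z m = fun ω => max (G m ω) (μ[Z (m + 1)|ℱ m] ω)

namespace IsSnellEnvelope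

variable {M : ℕ} {G Z : ℕ → Ω → ℝ}

theorem integrable (hZ : IsSnellEnvelope μ ℱ M G Z) (hG : ∀ m ≤ M, Integrable (G m) μ) :
    ∀ m ≤ M, Integrable (Z m) μ := by
  intro m hm
  induction hm using Nat.decreasingInduction with
  | self => rw [hZ.terminal]; exact hG M le_rfl
  | of_succ k hk _ => rw [hZ.step k hk]; exact (hG k hk.le).sup integrable_condExp

theorem measurable (hZ : IsSnellEnvelope μ ℱ M G Z) (hG : Adapted ℱ G) :
    ∀ m ≤ M, Measurable[ℱ m] (Z m) := by
  intro m hm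
  rcases hm.lt_or_eq with hlt | rfl
  · rw [hZ.step m hlt]; exact (hG m).max stronglyMeasurable_condExp.measurable
  · rw [hZ.terminal]; exact hG m

theorem le (hZ : IsSnellEnvelope μ ℱ M G Z) {m : ℕ} (hm : m ≤ M) (ω : Ω) : G m ω ≤ Z m ω := by
  rcases hm.lt_or_eq with hlt | rfl
  · rw [hZ.step m hlt]; exact le_max_left _ _
  · rw [hZ.terminal]

theorem condExp_le (hZ : IsSnellEnvelope μ ℱ M G Z) {m : ℕ} (hm : m < M) (ω : Ω) :
    μ[Z (m + 1)|ℱ m] ω ≤ Z m ω := by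
  rw [hZ.step m hm]; exact le_max_right _ _

theorem eq_condExp_of_ne (hZ : IsSnellEnvelope μ ℱ M G Z) {m : ℕ} (hm : m < M) {ω : Ω}
    (hne : Z m ω ≠ G m ω) : Z m ω = μ[Z (m + 1)|ℱ m] ω := by
  have hstep := congrFun (hZ.step m hm) ω
  rcases max_choice (G m ω) (μ[Z (m + 1)|ℱ m] ω) with h | h
  · exact absurd (hstep.trans h) hne
  · exact hstep.trans h

theorem apply_firstEntry_eq (hZ : IsSnellEnvelope μ ℱ M G Z) (ω : Ω) :
    Z (firstEntry (fun m => {ω | Z m ω = G m ω}) M ω) ω =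
      G (firstEntry (fun m => {ω | Z m ω = G m ω}) M ω) ω := by
  rcases firstEntry_eq_or_mem ω with hM | hmem
  · rw [hM, hZ.terminal]
  · exact hmem

theorem isStoppingTime_firstEntry (hZ : IsSnellEnvelope μ ℱ M G Z) (hG : Adapted ℱ G) :
    IsStoppingTime ℱ
      (fun ω => (firstEntry (fun m => {ω | Z m ω = G m ω}) M ω : WithTop ℕ)) :=
  MeasureTheory.isStoppingTime_firstEntry fun k hk =>
    measurableSet_eq_fun (hZ.measurable hG k hk.le) (hG k)

variable [SigmaFiniteFiltration μ ℱ]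

theorem integral_comp_le (hZ : IsSnellEnvelope μ ℱ M G Z) (hG : ∀ m ≤ M, Integrable (G m) μ)
    {τ : Ω → ℕ} (hτ : IsStoppingTime ℱ (fun ω => (τ ω : WithTop ℕ))) (hbdd : ∀ ω, τ ω ≤ M) :
    ∫ ω, Z (τ ω) ω ∂μ ≤ ∫ ω, Z 0 ω ∂μ := by
  rw [← sub_nonpos, integral_comp_sub_eq_sum_setIntegral_condExp (hZ.integrable hG) hτ hbdd]
  exact sum_nonpos fun i hi =>
    setIntegral_nonpos (ℱ.le i _ (measurableSet_lt_of_isStoppingTime hτ i)) fun ω _ =>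
      sub_nonpos.mpr (hZ.condExp_le (mem_range.mp hi) ω)

theorem integral_comp_firstEntry (hZ : IsSnellEnvelope μ ℱ M G Z)
    (hGint : ∀ m ≤ M, Integrable (G m) μ) (hG : Adapted ℱ G) :
    ∫ ω, Z (firstEntry (fun m => {ω | Z m ω = G m ω}) M ω) ω ∂μ = ∫ ω, Z 0 ω ∂μ := by
  rw [← sub_eq_zero, integral_comp_sub_eq_sum_setIntegral_condExp (hZ.integrable hGint)
    (hZ.isStoppingTime_firstEntry hG) firstEntry_le]
  exact sum_eq_zero fun i hi => setIntegral_eq_zero_of_forall_eq_zero fun ω hω =>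
    sub_eq_zero.mpr (hZ.eq_condExp_of_ne (mem_range.mp hi) (notMem_of_lt_firstEntry hω)).symm

end IsSnellEnvelope

end MeasureTheory

theorem discrete_snell_optimal_stopping_general {Ω : Type*}
    {m0 : MeasurableSpace Ω} (μ : Measure Ω) [IsProbabilityMeasure μ]
    (ℱ : Filtration ℕ m0) (M : ℕ) (G Z : ℕ → Ω → ℝ)
    (hGadapted : Adapted ℱ G) (hGint : ∀ m, Integrable (G m) μ)
    (hZM : Z M = G M)
    (hZrec : ∀ m < M, Z m = fun ω => max (G m ω) ((μ[Z (m + 1)|ℱ m]) ω))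
    (τs : Ω → ℕ) (hτs : ∀ ω, τs ω = sInf {m : ℕ | m = M ∨ Z m ω = G m ω}) :
    (∫ ω, Z 0 ω ∂μ) = ∫ ω, G (τs ω) ω ∂μ ∧
    (∀ τ : Ω → ℕ, IsStoppingTime ℱ (fun ω => (τ ω : WithTop ℕ)) → (∀ ω, τ ω ≤ M) →
      ∫ ω, G (τ ω) ω ∂μ ≤ ∫ ω, G (τs ω) ω ∂μ) := by
  have hZ : IsSnellEnvelope μ ℱ M G Z := ⟨hZM, hZrec⟩
  have hG : ∀ m ≤ M, Integrable (G m) μ := fun m _ => hGint m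
  have hτs_eq : τs = firstEntry (fun m => {ω | Z m ω = G m ω}) M := funext hτs
  have hvalue : ∫ ω, Z 0 ω ∂μ = ∫ ω, G (τs ω) ω ∂μ := hτs_eq ▸
    (hZ.integral_comp_firstEntry hG hGadapted).symm.trans
      (integral_congr_ae (ae_of_all _ hZ.apply_firstEntry_eq))
  refine ⟨hvalue, fun τ hτ hbdd => ?_⟩
  calc ∫ ω, G (τ ω) ω ∂μ ≤ ∫ ω, Z (τ ω) ω ∂μ :=
        integral_mono (integrable_comp_of_isStoppingTime hG hτ hbdd)
          (integrable_comp_of_isStoppingTime (hZ.integrable hG) hτ hbdd)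
          fun ω => hZ.le (hbdd ω) ω
    _ ≤ ∫ ω, Z 0 ω ∂μ := hZ.integral_comp_le hG hτ hbdd
    _ = ∫ ω, G (τs ω) ω ∂μ := hvalue

/-- Discrete Snell envelope optimal stopping: with `ℱ 0` trivial, the first
time `τ*` at which `Z` meets `G` satisfies
`E[Z 0] = E[G_{τ*}] = sup_τ E[G_τ]` over `{0,…,M}`-valued stopping times. -/
theorem discrete_snell_optimal_stopping {Ω : Type*}
    {m0 : MeasurableSpace Ω} (μ : Measure Ω) [IsProbabilityMeasure μ]
    (ℱ : Filtration ℕ m0) (M : ℕ) (G Z : ℕ → Ω → ℝ)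
    (hGadapted : Adapted ℱ G) (hGint : ∀ m, Integrable (G m) μ)
    (htrivial : ℱ 0 = (⊥ : MeasurableSpace Ω))
    (hZM : Z M = G M)
    (hZrec : ∀ m < M, Z m = fun ω => max (G m ω) ((μ[Z (m + 1)|ℱ m]) ω))
    (τs : Ω → ℕ) (hτs : ∀ ω, τs ω = sInf {m : ℕ | m = M ∨ Z m ω = G m ω}) :
    (∫ ω, Z 0 ω ∂μ) = ∫ ω, G (τs ω) ω ∂μ ∧
    (∀ τ : Ω → ℕ, IsStoppingTime ℱ (fun ω => (τ ω : WithTop ℕ)) → (∀ ω, τ ω ≤ M) →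
      ∫ ω, G (τ ω) ω ∂μ ≤ ∫ ω, G (τs ω) ω ∂μ) :=
  discrete_snell_optimal_stopping_general μ ℱ M G Z hGadapted hGint hZM hZrec τs hτs
end

section
/- Two coupled discrete Snell-type recursions yield the game value: let Ŷ^0, Ŷ^1 satisfy Ŷ^i_M = Γ_i and Ŷ^i_m = max( E[Ŷ^i_{m+1}|F_m], −γ_{i,1−i}(m) + E[Ŷ^{1−i}_{m+1}|F_m] ) with γ_{0,1} = γ₋, γ_{1,0} = γ₊, γ₋ + γ₊ > 0 a.s. Then the process Ŷ^1_m − Ŷ^0_m equals the process V̂_m defined by V̂_M = Γ₁ − Γ₀ and V̂_m = min( γ₋(m), max( −γ₊(m), E[V̂_{m+1}|F_m] ) ), almost surely for each m, provided −γ₊(M) ≤ Γ₁ − Γ₀ ≤ γ₋(M) a.s. -/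
/-!
Subtracting the two switching recursions, the conditional expectations enter only through
their difference `E[Ŷ¹_{m+1} - Ŷ⁰_{m+1} | F_m]`, and the pointwise identity
`max b (-γ₊ + a) - max a (-γ₋ + b) = min γ₋ (max (-γ₊) (b - a))` (valid when `γ₋ + γ₊ ≥ 0`)
turns the difference of the two Snell steps into one step of the game recursion.
Backward induction from the common terminal value `Γ₁ - Γ₀` finishes the proof.
-/

open MeasureTheory

lemma max_sub_max_eq_min_max {a b γm γp : ℝ} (h : 0 ≤ γm + γp) :
    max b (-γp + a) - max a (-γm + b) = min γm (max (-γp) (b - a)) := by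
  simp only [max_def, min_def]
  split_ifs <;> linarith

lemma switching_sub_ae_eq_game_step {Ω : Type*} {m m0 : MeasurableSpace Ω} {μ : Measure Ω}
    {γm γp Y0 Y1 V Y0' Y1' V' : Ω → ℝ} (hY0' : Integrable Y0' μ) (hY1' : Integrable Y1' μ)
    (hpos : ∀ᵐ ω ∂μ, 0 ≤ γm ω + γp ω) (hdiff : Y1' - Y0' =ᵐ[μ] V')
    (hY0 : ∀ᵐ ω ∂μ, Y0 ω = max ((μ[Y0'|m]) ω) (-γm ω + (μ[Y1'|m]) ω))
    (hY1 : ∀ᵐ ω ∂μ, Y1 ω = max ((μ[Y1'|m]) ω) (-γp ω + (μ[Y0'|m]) ω))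
    (hV : ∀ᵐ ω ∂μ, V ω = min (γm ω) (max (-γp ω) ((μ[V'|m]) ω))) :
    Y1 - Y0 =ᵐ[μ] V := by
  have hcondExp : μ[V'|m] =ᵐ[μ] μ[Y1'|m] - μ[Y0'|m] :=
    (condExp_congr_ae hdiff).symm.trans (condExp_sub hY1' hY0' m)
  filter_upwards [hY0, hY1, hV, hpos, hcondExp] with ω e0 e1 eV hp hc
  rw [Pi.sub_apply, e0, e1, eV, hc, Pi.sub_apply]
  exact max_sub_max_eq_min_max hp

theorem switching_difference_eq_game_value_general {Ω : Type*} {m0 : MeasurableSpace Ω}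
    (μ : Measure Ω) (ℱ : Filtration ℕ m0) (M : ℕ)
    (γminus γplus : ℕ → Ω → ℝ) (Y0 Y1 V : ℕ → Ω → ℝ) (Γ0 Γ1 : Ω → ℝ)
    (hint0 : ∀ m, Integrable (Y0 m) μ) (hint1 : ∀ m, Integrable (Y1 m) μ)
    (hpos : ∀ m, ∀ᵐ ω ∂μ, 0 < γminus m ω + γplus m ω)
    (hterm0 : Y0 M = Γ0) (hterm1 : Y1 M = Γ1)
    (hrec0 : ∀ m < M, ∀ᵐ ω ∂μ,
      Y0 m ω = max ((μ[Y0 (m + 1)|ℱ m]) ω) (-γminus m ω + (μ[Y1 (m + 1)|ℱ m]) ω))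
    (hrec1 : ∀ m < M, ∀ᵐ ω ∂μ,
      Y1 m ω = max ((μ[Y1 (m + 1)|ℱ m]) ω) (-γplus m ω + (μ[Y0 (m + 1)|ℱ m]) ω))
    (hVterm : ∀ ω, V M ω = Γ1 ω - Γ0 ω)
    (hVrec : ∀ m < M, ∀ᵐ ω ∂μ,
      V m ω = min (γminus m ω) (max (-γplus m ω) ((μ[V (m + 1)|ℱ m]) ω))) :
    ∀ m ≤ M, ∀ᵐ ω ∂μ, Y1 m ω - Y0 m ω = V m ω := by
  intro m hm
  induction hm using Nat.decreasingInduction with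
  | self =>
    filter_upwards with ω
    rw [hterm0, hterm1, hVterm]
  | of_succ k hk ih =>
    exact switching_sub_ae_eq_game_step (hint0 _) (hint1 _)
      ((hpos k).mono fun _ h => h.le) ih (hrec0 k hk) (hrec1 k hk) (hVrec k hk)

/-- The difference of the two coupled Snell-type switching recursions equals
the Dynkin game value recursion. -/
theorem switching_difference_eq_game_value {Ω : Type*} {m0 : MeasurableSpace Ω}
    (μ : Measure Ω) [IsProbabilityMeasure μ] (ℱ : Filtration ℕ m0) (M : ℕ)
    (γminus γplus : ℕ → Ω → ℝ) (Y0 Y1 V : ℕ → Ω → ℝ) (Γ0 Γ1 : Ω → ℝ)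
    (hΓ0 : Integrable Γ0 μ) (hΓ1 : Integrable Γ1 μ)
    (hΓ0meas : StronglyMeasurable[ℱ M] Γ0) (hΓ1meas : StronglyMeasurable[ℱ M] Γ1)
    (hint0 : ∀ m, Integrable (Y0 m) μ) (hint1 : ∀ m, Integrable (Y1 m) μ)
    (hVint : ∀ m, Integrable (V m) μ)
    (hpos : ∀ m, ∀ᵐ ω ∂μ, 0 < γminus m ω + γplus m ω)
    (hΓ : ∀ᵐ ω ∂μ, -γplus M ω ≤ Γ1 ω - Γ0 ω ∧ Γ1 ω - Γ0 ω ≤ γminus M ω)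
    (hterm0 : Y0 M = Γ0) (hterm1 : Y1 M = Γ1)
    (hrec0 : ∀ m < M, ∀ᵐ ω ∂μ,
      Y0 m ω = max ((μ[Y0 (m + 1)|ℱ m]) ω) (-γminus m ω + (μ[Y1 (m + 1)|ℱ m]) ω))
    (hrec1 : ∀ m < M, ∀ᵐ ω ∂μ,
      Y1 m ω = max ((μ[Y1 (m + 1)|ℱ m]) ω) (-γplus m ω + (μ[Y0 (m + 1)|ℱ m]) ω))
    (hVterm : ∀ ω, V M ω = Γ1 ω - Γ0 ω)
    (hVrec : ∀ m < M, ∀ᵐ ω ∂μ,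
      V m ω = min (γminus m ω) (max (-γplus m ω) ((μ[V (m + 1)|ℱ m]) ω))) :
    ∀ m ≤ M, ∀ᵐ ω ∂μ, Y1 m ω - Y0 m ω = V m ω :=
  switching_difference_eq_game_value_general μ ℱ M γminus γplus Y0 Y1 V Γ0 Γ1 hint0 hint1 hpos
    hterm0 hterm1 hrec0 hrec1 hVterm hVrec
end
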